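/- For every real k, the internal-mode overlap A_{2,a}(k) = ∫_{-∞}^{∞} cos(√2 k ξ) tanh²(ξ) sech³(ξ) dξ equals π(-4k⁴ + 4k² + 3) / (24 cosh(πk/√2)). -/

import Mathlib

/-!
Since `tanh² = 1 - sech²`, the integral is `I₃ - I₅` with `Iₙ(κ) = ∫ cos (κ x) sechⁿ x` and
`κ = √2 k`. Integrating the derivative of `(n cos (κ x) tanh x - κ sin (κ x)) sechⁿ x` over `ℝ`
gives the recurrence `n (n + 1) Iₙ₊₂ = (n² + κ²) Iₙ`. The base case `I₁ = π / cosh (π κ / 2)`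
comes from the substitution `u = (1 + tanh y) / 2`, which turns `∫ e^{iκy} sech y` into the Beta
integral `B(s, 1 - s) = Γ(s) Γ(1 - s) = π / sin (π s)` with `s = 1/2 + iκ/2`.
-/

open Real MeasureTheory

noncomputable def sech (x : ℝ) : ℝ := (Real.cosh x)⁻¹

open Set

lemma sech_pos (x : ℝ) : 0 < sech x := inv_pos.2 (cosh_pos x)

lemma sech_le_one (x : ℝ) : sech x ≤ 1 := inv_le_one_of_one_le₀ (one_le_cosh x)

lemma continuous_sech : Continuous sech :=
  continuous_cosh.inv₀ fun x => (cosh_pos x).ne'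

lemma tanh_sq_eq_one_sub_sech_sq (x : ℝ) : tanh x ^ 2 = 1 - sech x ^ 2 := by
  have := (cosh_pos x).ne'
  rw [tanh_eq_sinh_div_cosh, sech]
  field_simp
  linarith [cosh_sq_sub_sinh_sq x]

lemma sech_le_two_mul_exp_neg_abs (x : ℝ) : sech x ≤ 2 * exp (-|x|) := by
  rw [sech, exp_neg, ← cosh_abs, cosh_eq, inv_le_iff_one_le_mul₀ (by positivity)]
  have := exp_pos (-|x|)
  field_simp
  nlinarith [exp_pos |x|]

lemma integrable_exp_neg_abs : Integrable fun x : ℝ => exp (-|x|) := by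
  have hneg : IntegrableOn (fun x : ℝ => exp (-|x|)) (Iic 0) :=
    (integrableOn_exp_Iic 0).congr_fun (fun x hx => by simp [abs_of_nonpos (mem_Iic.1 hx)])
      measurableSet_Iic
  have hpos : IntegrableOn (fun x : ℝ => exp (-|x|)) (Ioi 0) :=
    (exp_neg_integrableOn_Ioi 0 one_pos).congr_fun
      (fun x hx => by simp [abs_of_pos (mem_Ioi.1 hx)]) measurableSet_Ioi
  simpa [← integrableOn_univ, Iic_union_Ioi] using hneg.union hpos

lemma integrable_sech_pow {n : ℕ} (hn : n ≠ 0) : Integrable fun x => sech x ^ n := by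
  refine (integrable_exp_neg_abs.const_mul 2).mono' (continuous_sech.pow n).aestronglyMeasurable
    (ae_of_all _ fun x => ?_)
  rw [norm_of_nonneg (pow_pos (sech_pos x) n).le]
  calc sech x ^ n ≤ sech x := pow_le_of_le_one (sech_pos x).le (sech_le_one x) hn
    _ ≤ 2 * exp (-|x|) := sech_le_two_mul_exp_neg_abs x

lemma integrable_mul_sech_pow {f : ℝ → ℝ} {C : ℝ} (hf : Continuous f) (hC : ∀ x, |f x| ≤ C)
    {n : ℕ} (hn : n ≠ 0) : Integrable fun x => f x * sech x ^ n :=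
  (integrable_sech_pow hn).bdd_mul hf.aestronglyMeasurable (ae_of_all _ hC)

lemma integrable_cos_mul_sech_pow (κ : ℝ) {n : ℕ} (hn : n ≠ 0) :
    Integrable fun x => cos (κ * x) * sech x ^ n :=
  integrable_mul_sech_pow (by fun_prop) (fun x => abs_cos_le_one _) hn

lemma hasDerivAt_tanh (x : ℝ) : HasDerivAt tanh (sech x ^ 2) x := by
  have := (cosh_pos x).ne'
  rw [show tanh = fun x => sinh x / cosh x from funext tanh_eq_sinh_div_cosh]
  refine ((hasDerivAt_sinh x).div (hasDerivAt_cosh x) this).congr_deriv ?_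
  rw [sech]
  field_simp
  linarith [cosh_sq_sub_sinh_sq x]

@[fun_prop]
lemma continuous_tanh : Continuous tanh :=
  continuous_iff_continuousAt.2 fun x => (hasDerivAt_tanh x).continuousAt

lemma hasDerivAt_sech_pow (n : ℕ) (x : ℝ) :
    HasDerivAt (fun y => sech y ^ n) (-n * tanh x * sech x ^ n) x := by
  have := (cosh_pos x).ne'
  have hsech : HasDerivAt sech (-(tanh x * sech x)) x := by
    refine ((hasDerivAt_cosh x).inv this).congr_deriv ?_
    rw [tanh_eq_sinh_div_cosh, sech]
    field_simp
  refine (hsech.pow n).congr_deriv ?_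
  rcases eq_or_ne n 0 with rfl | hn
  · simp
  · rw [← pow_sub_one_mul hn]; ring

lemma integral_cos_mul_sech_pow_add_two (κ : ℝ) {n : ℕ} (hn : n ≠ 0) :
    n * (n + 1) * ∫ x, cos (κ * x) * sech x ^ (n + 2)
      = (n ^ 2 + κ ^ 2) * ∫ x, cos (κ * x) * sech x ^ n := by
  set F : ℝ → ℝ := fun x => (n * cos (κ * x) * tanh x - κ * sin (κ * x)) * sech x ^ n
  set F' : ℝ → ℝ := fun x => n * (n + 1) * (cos (κ * x) * sech x ^ (n + 2))
      - (n ^ 2 + κ ^ 2) * (cos (κ * x) * sech x ^ n)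
  have hF : ∀ x, HasDerivAt F (F' x) x := by
    intro x
    have hcos := ((hasDerivAt_id x).const_mul κ).cos
    have hsin := ((hasDerivAt_id x).const_mul κ).sin
    refine ((((hcos.const_mul (n : ℝ)).mul (hasDerivAt_tanh x)).sub (hsin.const_mul κ)).mul
      (hasDerivAt_sech_pow n x)).congr_deriv ?_
    simp only [F', Pi.mul_apply, Pi.sub_apply, id, mul_one, pow_add]
    linear_combination (-(n : ℝ) ^ 2 * cos (κ * x) * sech x ^ n) * tanh_sq_eq_one_sub_sech_sq x
  have hF_int : Integrable F := by
    refine integrable_mul_sech_pow (C := n + |κ|) (by fun_prop) (fun x => ?_) hn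
    calc |n * cos (κ * x) * tanh x - κ * sin (κ * x)|
        ≤ n * |cos (κ * x)| * |tanh x| + |κ| * |sin (κ * x)| := by
          simpa [abs_mul] using abs_sub (n * cos (κ * x) * tanh x) (κ * sin (κ * x))
      _ ≤ n * 1 * 1 + |κ| * 1 := by
          gcongr
          exacts [abs_cos_le_one _, (abs_tanh_lt_one x).le, abs_sin_le_one _]
      _ = n + |κ| := by ring
  have hI₂ := (integrable_cos_mul_sech_pow κ (n := n + 2) (by omega)).const_mul (n * (n + 1 : ℝ))
  have hI := (integrable_cos_mul_sech_pow κ hn).const_mul (n ^ 2 + κ ^ 2)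
  have := integral_eq_zero_of_hasDerivAt_of_integrable hF (hI₂.sub hI) hF_int
  rw [integral_sub hI₂ hI, integral_const_mul, integral_const_mul] at this
  linarith

lemma Complex.betaIntegral_half_add_half_sub (κ : ℝ) :
    betaIntegral (1 / 2 + κ / 2 * I) (1 / 2 - κ / 2 * I) = (π / Real.cosh (π * κ / 2) : ℝ) := by
  set s : ℂ := 1 / 2 + κ / 2 * I
  have hs : 0 < s.re := by simp [s]
  have hs' : 0 < (1 - s).re := by simp [s]; norm_num
  have hsin : sin (π * s) = (Real.cosh (π * κ / 2) : ℂ) := by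
    rw [show (π : ℂ) * s = ((π * κ / 2 : ℝ) : ℂ) * I + π / 2 by simp only [s]; push_cast; ring,
      sin_add_pi_div_two, cos_mul_I, ofReal_cosh]
  have hβ := Gamma_mul_Gamma_eq_betaIntegral hs hs'
  rw [add_sub_cancel, Gamma_one, one_mul, Gamma_mul_Gamma_one_sub, hsin] at hβ
  rw [show (1 / 2 - κ / 2 * I : ℂ) = 1 - s by simp only [s]; ring, ← hβ,
    ofReal_div]

lemma Complex.ofReal_exp_cpow (a : ℝ) (w : ℂ) : (Real.exp a : ℂ) ^ w = exp (a * w) := by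
  rw [cpow_def_of_ne_zero (ofReal_ne_zero.2 (Real.exp_pos a).ne'),
    ← ofReal_log (Real.exp_pos a).le, Real.log_exp]

lemma hasDerivAt_one_add_tanh_div_two (y : ℝ) :
    HasDerivAt (fun y => (1 + tanh y) / 2) (sech y ^ 2 / 2) y :=
  ((hasDerivAt_tanh y).const_add 1).div_const 2

lemma image_one_add_tanh_div_two : (fun y => (1 + tanh y) / 2) '' univ = Ioo 0 1 := by
  ext u
  constructor
  · rintro ⟨y, -, rfl⟩
    constructor <;> linarith [neg_one_lt_tanh y, tanh_lt_one y]
  · rintro ⟨hu0, hu1⟩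
    obtain ⟨y, -, hy⟩ := tanh_surjOn (show 2 * u - 1 ∈ Ioo (-1) 1 by constructor <;> linarith)
    refine ⟨y, mem_univ y, ?_⟩
    simp only [hy]
    ring

lemma one_add_tanh_div_two_eq_exp (y : ℝ) :
    (1 + tanh y) / 2 = exp (y - log (2 * cosh y)) := by
  have := cosh_pos y
  rw [exp_sub, exp_log (by positivity), tanh_eq_sinh_div_cosh, ← cosh_add_sinh]
  field_simp

lemma one_sub_tanh_div_two_eq_exp (y : ℝ) :
    (1 - tanh y) / 2 = exp (-y - log (2 * cosh y)) := by
  have := cosh_pos y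
  rw [exp_sub, exp_log (by positivity), tanh_eq_sinh_div_cosh, exp_neg, ← cosh_add_sinh]
  field_simp
  linarith [cosh_sq_sub_sinh_sq y]

lemma integral_cexp_mul_sech (κ : ℝ) :
    ∫ y : ℝ, Complex.exp ((κ * y : ℝ) * Complex.I) * sech y = (π / cosh (π * κ / 2) : ℝ) := by
  set s : ℂ := 1 / 2 + κ / 2 * Complex.I
  set t : ℂ := 1 / 2 - κ / 2 * Complex.I
  have hsubst := integral_image_eq_integral_abs_deriv_smul MeasurableSet.univ
    (fun y _ => (hasDerivAt_one_add_tanh_div_two y).hasDerivWithinAt)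
    (fun a _ b _ h => tanh_injective (by linarith [h]))
    (fun u : ℝ => (u : ℂ) ^ (s - 1) * (1 - (u : ℂ)) ^ (t - 1))
  rw [image_one_add_tanh_div_two, setIntegral_univ] at hsubst
  have hβ : Complex.betaIntegral s t
      = ∫ u in Ioo (0 : ℝ) 1, (u : ℂ) ^ (s - 1) * (1 - (u : ℂ)) ^ (t - 1) := by
    rw [Complex.betaIntegral, intervalIntegral.integral_of_le zero_le_one,
      integral_Ioc_eq_integral_Ioo]
  rw [← Complex.betaIntegral_half_add_half_sub, hβ, hsubst]
  congr 1 with y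
  set L := log (2 * cosh y)
  have hL : exp L = 2 * cosh y := exp_log (by linarith [cosh_pos y])
  have h1 : (((1 + tanh y) / 2 : ℝ) : ℂ) = (exp (y - L) : ℝ) := by
    rw [one_add_tanh_div_two_eq_exp]
  have h2 : 1 - (((1 + tanh y) / 2 : ℝ) : ℂ) = (exp (-y - L) : ℝ) := by
    rw [← one_sub_tanh_div_two_eq_exp]; push_cast; ring
  rw [h2, h1, Complex.ofReal_exp_cpow, Complex.ofReal_exp_cpow, ← Complex.exp_add,
    show ((y - L : ℝ) : ℂ) * (s - 1) + ((-y - L : ℝ) : ℂ) * (t - 1) = (κ * y : ℝ) * Complex.I + L by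
      simp only [s, t]; push_cast; ring,
    Complex.exp_add, ← Complex.ofReal_exp, hL,
    abs_of_pos (by have := sech_pos y; positivity), Complex.real_smul]
  have := (cosh_pos y).ne'
  simp only [sech]
  push_cast
  field_simp

lemma integral_cos_mul_sech (κ : ℝ) : ∫ x, cos (κ * x) * sech x = π / cosh (π * κ / 2) := by
  have hint : Integrable fun y : ℝ => Complex.exp ((κ * y : ℝ) * Complex.I) * sech y := by
    have hsech : Integrable fun y : ℝ => (sech y : ℂ) := by
      simpa using (integrable_sech_pow one_ne_zero).ofReal (𝕜 := ℂ)
    exact hsech.bdd_mul (c := 1) (by fun_prop)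
      (ae_of_all _ fun y => (Complex.norm_exp_ofReal_mul_I _).le)
  have h := congrArg Complex.re (integral_cexp_mul_sech κ)
  rw [← RCLike.re_to_complex, ← integral_re hint] at h
  simpa only [RCLike.re_to_complex, Complex.ofReal_re, Complex.re_mul_ofReal,
    Complex.exp_ofReal_mul_I_re] using h

lemma integral_cos_mul_tanh_sq_mul_sech_pow_three (κ : ℝ) :
    ∫ x, cos (κ * x) * tanh x ^ 2 * sech x ^ 3
      = (1 + κ ^ 2) * (3 - κ ^ 2) / 24 * (π / cosh (π * κ / 2)) := by
  have h3 := integral_cos_mul_sech_pow_add_two κ one_ne_zero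
  have h5 := integral_cos_mul_sech_pow_add_two κ three_ne_zero
  simp only [pow_one, integral_cos_mul_sech] at h3
  have hsplit : ∫ x, cos (κ * x) * tanh x ^ 2 * sech x ^ 3
      = (∫ x, cos (κ * x) * sech x ^ 3) - ∫ x, cos (κ * x) * sech x ^ 5 := by
    rw [← integral_sub (integrable_cos_mul_sech_pow κ three_ne_zero)
      (integrable_cos_mul_sech_pow κ (by norm_num))]
    congr 1 with x
    rw [tanh_sq_eq_one_sub_sech_sq]
    ring
  rw [hsplit]
  push_cast at h3 h5
  linear_combination (-1 / 12 : ℝ) * h5 + (3 - κ ^ 2) / 24 * h3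

theorem A2a_overlap_closed_form (k : ℝ) :
    ∫ ξ : ℝ, Real.cos (Real.sqrt 2 * k * ξ) * (Real.tanh ξ) ^ 2 * (sech ξ) ^ 3
      = Real.pi * (-4 * k ^ 4 + 4 * k ^ 2 + 3)
        / (24 * Real.cosh (Real.pi * k / Real.sqrt 2)) := by
  have hsqrt : √2 ^ 2 = 2 := sq_sqrt zero_le_two
  have harg : π * (√2 * k) / 2 = π * k / √2 := by
    field_simp
    rw [hsqrt, mul_comm]
  rw [integral_cos_mul_tanh_sq_mul_sech_pow_three, harg, mul_pow, hsqrt]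
  ring
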